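/- Let y ∈ ℓ∞(ℤ) be finitely supported, with support I ⊆ ℤ. Then there exists x ∈ F^{(λ)} such that x(t) = y(t) for all t ∈ I and |x(t)| ≤ |λ|⁻¹ ‖y‖_∞ for all t ∉ I. -/

import Mathlib

/-!
Let `w_K` be `x₀` spread out along `2^K ℤ`, i.e. `w_K(2^K m) = x₀(m)` and `w_K = 0` off `2^K ℤ`.
Since `b(2m) = b(m)` and `b(2m + 1) = b(m) + 1`, we have `w_K = (1 + λ⁻¹ σ^{2^K}) w_{K+1}`, and
as `‖λ⁻¹ σ^{2^K}‖ < 1` the Neumann series shows inductively that every `w_K` lies in the closed,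
shift-invariant space `F^{(λ)}`. Moreover `w_K(0) = 1` and `|w_K(n)| ≤ |λ|⁻¹` for `n ≠ 0`. Once
the elements of `I` are pairwise incongruent modulo `2^K`, at most one of the peaks `σ^t w_K`,
`t ∈ I`, is nonzero at any given point, so `x = ∑_{t ∈ I} y(t) σ^t w_K` does the job.
-/

open scoped ENNReal
open Filter Topology

noncomputable section

/-- `ℓ₁(ℤ)`, the complex Banach space of absolutely summable bilateral sequences. -/
abbrev ellOne : Type := lp (fun _ : ℤ => ℂ) 1

/-- `ℓ∞(ℤ)`, the complex Banach space of bounded bilateral sequences. -/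
abbrev ellInf : Type := lp (fun _ : ℤ => ℂ) ∞

lemma memℓp_zshift (m : ℤ) (x : ellInf) : Memℓp (fun n : ℤ => x (n - m)) ∞ := by
  have hx := memℓp_infty_iff.1 (lp.memℓp x)
  refine memℓp_infty (hx.mono ?_)
  rintro r ⟨n, rfl⟩
  exact ⟨n - m, rfl⟩

/-- translation by `m` on `ℓ∞(ℤ)`: `(zshift m x) n = x (n - m)`.  In particular `zshift 1` is
the bilateral shift `σ`, with `σ(x)(n) = x (n - 1)`, and `zshift m = σ^m`. -/
def zshift (m : ℤ) (x : ellInf) : ellInf := ⟨fun n => x (n - m), memℓp_zshift m x⟩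

/-- `b(n)` = number of ones in the binary expansion of `n ≥ 0`. -/
def binOnes (n : ℤ) : ℕ := (Nat.digits 2 n.toNat).sum

/-- the element `x₀`: `x₀(n) = λ^{-b(n)}` for `n ≥ 0` and `x₀(n) = 0` for `n < 0`. -/
def x0Fun (lam : ℂ) : ℤ → ℂ := fun n => if 0 ≤ n then lam⁻¹ ^ binOnes n else 0

lemma x0_mem (lam : ℂ) (h : 1 < ‖lam‖) : Memℓp (x0Fun lam) ∞ := by
  refine memℓp_infty ⟨1, ?_⟩
  rintro r ⟨n, rfl⟩
  simp only [x0Fun]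
  split_ifs
  · rw [norm_pow]
    refine pow_le_one₀ (norm_nonneg _) ?_
    rw [norm_inv]
    exact inv_le_one_of_one_le₀ h.le
  · simp

/-- `x₀` as an element of `ℓ∞(ℤ)`. -/
def x0L (lam : ℂ) (h : 1 < ‖lam‖) : ellInf := ⟨x0Fun lam, x0_mem lam h⟩

/-- `F^{(λ)}`: the closed linear span in `ℓ∞(ℤ)` of the bilateral shifts `σ^m(x₀)`, `m ∈ ℤ`. -/
def Flam (lam : ℂ) (h : 1 < ‖lam‖) : Submodule ℂ ellInf :=
  (Submodule.span ℂ (Set.range fun m : ℤ => zshift m (x0L lam h))).topologicalClosure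

def dilate {M : Type*} [Zero M] (d : ℤ) (f : ℤ → M) (n : ℤ) : M :=
  if d ∣ n then f (n / d) else 0

section Dilate

variable {M : Type*} [Zero M] {d : ℤ} {f : ℤ → M}

lemma dilate_mul_apply (hd : d ≠ 0) (f : ℤ → M) (m : ℤ) : dilate d f (d * m) = f m := by
  rw [dilate, if_pos (dvd_mul_right d m), Int.mul_ediv_cancel_left m hd]

lemma dilate_apply_of_not_dvd {n : ℤ} (hn : ¬ d ∣ n) : dilate d f n = 0 := if_neg hn

lemma dvd_of_dilate_ne_zero {n : ℤ} (hn : dilate d f n ≠ 0) : d ∣ n := by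
  by_contra h
  exact hn (dilate_apply_of_not_dvd h)

lemma dilate_one (f : ℤ → M) : dilate 1 f = f := by
  funext n
  simpa using dilate_mul_apply one_ne_zero f n

lemma dilate_apply_zero (d : ℤ) (f : ℤ → M) : dilate d f 0 = f 0 := by
  simp [dilate]

lemma dilate_mul {e : ℤ} (hd : d ≠ 0) (he : e ≠ 0) (f : ℤ → M) :
    dilate (d * e) f = dilate d (dilate e f) := by
  funext n
  by_cases hde : d * e ∣ n
  · obtain ⟨m, rfl⟩ := hde
    rw [dilate_mul_apply (mul_ne_zero hd he), mul_assoc, dilate_mul_apply hd,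
      dilate_mul_apply he]
  · rw [dilate_apply_of_not_dvd hde]
    by_cases hdn : d ∣ n
    · obtain ⟨k, rfl⟩ := hdn
      rw [dilate_mul_apply hd, dilate_apply_of_not_dvd fun hek => hde (mul_dvd_mul_left d hek)]
    · rw [dilate_apply_of_not_dvd hdn]

end Dilate

lemma dilate_eq_add_of_eq_add {R : Type*} [Semiring R] {f g : ℤ → R} {c : R}
    (hfg : ∀ n, f n = g n + c * g (n - 1)) {d : ℤ} (hd : d ≠ 0) (n : ℤ) :
    dilate d f n = dilate d g n + c * dilate d g (n - d) := by
  by_cases hdn : d ∣ n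
  · obtain ⟨m, rfl⟩ := hdn
    rw [show d * m - d = d * (m - 1) by ring, dilate_mul_apply hd, dilate_mul_apply hd,
      dilate_mul_apply hd, hfg]
  · have hdn' : ¬ d ∣ n - d := fun h => hdn (by simpa using dvd_add h (dvd_refl d))
    rw [dilate_apply_of_not_dvd hdn, dilate_apply_of_not_dvd hdn, dilate_apply_of_not_dvd hdn',
      mul_zero, add_zero]

lemma norm_dilate_le {E : Type*} [SeminormedAddGroup E] {f : ℤ → E} {C : ℝ} (hC : 0 ≤ C)
    (hf : ∀ m, ‖f m‖ ≤ C) (d n : ℤ) : ‖dilate d f n‖ ≤ C := by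
  unfold dilate
  split_ifs
  · exact hf _
  · simpa using hC

lemma norm_dilate_le_of_ne_zero {E : Type*} [SeminormedAddGroup E] {f : ℤ → E} {C : ℝ}
    (hC : 0 ≤ C) (hf : ∀ m ≠ 0, ‖f m‖ ≤ C) {d n : ℤ} (hn : n ≠ 0) : ‖dilate d f n‖ ≤ C := by
  unfold dilate
  split_ifs with hdn
  · exact hf _ fun h => hn (by simpa [h] using (Int.ediv_mul_cancel hdn).symm)
  · simpa using hC

lemma binOnes_two_mul {m : ℤ} (hm : 0 ≤ m) : binOnes (2 * m) = binOnes m := by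
  obtain ⟨k, rfl⟩ := Int.eq_ofNat_of_zero_le hm
  rcases eq_or_ne k 0 with rfl | hk
  · rfl
  · have := Nat.digits_add 2 one_lt_two 0 k two_pos (Or.inr hk)
    simp only [binOnes, Int.toNat_natCast]
    rw [show (2 * (k : ℤ)).toNat = 0 + 2 * k by omega, this, List.sum_cons, zero_add]

lemma binOnes_two_mul_add_one {m : ℤ} (hm : 0 ≤ m) : binOnes (2 * m + 1) = binOnes m + 1 := by
  obtain ⟨k, rfl⟩ := Int.eq_ofNat_of_zero_le hm
  have := Nat.digits_add 2 one_lt_two 1 k one_lt_two (Or.inl one_ne_zero)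
  simp only [binOnes, Int.toNat_natCast]
  rw [show (2 * (k : ℤ) + 1).toNat = 1 + 2 * k by omega, this, List.sum_cons, add_comm]

lemma one_le_binOnes {n : ℤ} (hn : 0 < n) : 1 ≤ binOnes n := by
  induction n using Int.strongRec (m := 1) with
  | lt n hn' => omega
  | ge n _ ih =>
    obtain ⟨m, rfl | rfl⟩ := Int.even_or_odd' n
    · rw [binOnes_two_mul (by omega)]
      exact ih m (by omega) (by omega)
    · rw [binOnes_two_mul_add_one (by omega)]
      omega

section X0

variable (lam : ℂ)

lemma x0Fun_zero : x0Fun lam 0 = 1 := by simp [x0Fun, binOnes]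

lemma x0Fun_two_mul (m : ℤ) : x0Fun lam (2 * m) = x0Fun lam m := by
  by_cases hm : 0 ≤ m
  · simp [x0Fun, hm, binOnes_two_mul hm]
  · simp [x0Fun, hm, show ¬ 0 ≤ 2 * m by omega]

lemma x0Fun_two_mul_add_one (m : ℤ) : x0Fun lam (2 * m + 1) = lam⁻¹ * x0Fun lam m := by
  by_cases hm : 0 ≤ m
  · rw [x0Fun, x0Fun, if_pos (by omega), if_pos hm, binOnes_two_mul_add_one hm, pow_succ,
      mul_comm]
  · simp [x0Fun, hm, show ¬ 0 ≤ 2 * m + 1 by omega]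

/-- In generating-function form: `∑ λ^{-b(n)} zⁿ = (1 + z/λ) ∑ λ^{-b(m)} z^{2m}`. -/
lemma x0Fun_eq_dilate_two_add (n : ℤ) :
    x0Fun lam n = dilate 2 (x0Fun lam) n + lam⁻¹ * dilate 2 (x0Fun lam) (n - 1) := by
  obtain ⟨m, rfl | rfl⟩ := Int.even_or_odd' n
  · rw [dilate_mul_apply two_ne_zero, dilate_apply_of_not_dvd (by omega), mul_zero, add_zero,
      x0Fun_two_mul]
  · rw [dilate_apply_of_not_dvd (by omega), add_sub_cancel_right, dilate_mul_apply two_ne_zero,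
      zero_add, x0Fun_two_mul_add_one]

variable {lam}

lemma norm_x0Fun_le_inv (h : 1 < ‖lam‖) {n : ℤ} (hn : n ≠ 0) : ‖x0Fun lam n‖ ≤ ‖lam‖⁻¹ := by
  unfold x0Fun
  split_ifs with hn0
  · rw [norm_pow, norm_inv]
    simpa using pow_le_pow_of_le_one (by positivity) (inv_le_one_of_one_le₀ h.le)
      (one_le_binOnes (lt_of_le_of_ne hn0 (Ne.symm hn)))
  · simp

lemma norm_x0Fun_le_one (h : 1 < ‖lam‖) (n : ℤ) : ‖x0Fun lam n‖ ≤ 1 := by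
  rcases eq_or_ne n 0 with rfl | hn
  · simp [x0Fun_zero]
  · exact (norm_x0Fun_le_inv h hn).trans (inv_le_one_of_one_le₀ h.le)

end X0

def peak (lam : ℂ) (h : 1 < ‖lam‖) (K : ℕ) : ellInf :=
  ⟨dilate (2 ^ K) (x0Fun lam),
    memℓp_infty ⟨1, by
      rintro _ ⟨n, rfl⟩
      exact norm_dilate_le zero_le_one (norm_x0Fun_le_one h) _ n⟩⟩

lemma peak_apply (lam : ℂ) (h : 1 < ‖lam‖) (K : ℕ) (n : ℤ) :
    peak lam h K n = dilate (2 ^ K) (x0Fun lam) n := rfl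

lemma peak_zero (lam : ℂ) (h : 1 < ‖lam‖) : peak lam h 0 = x0L lam h := by
  ext1
  simp [peak, x0L, dilate_one]

lemma peak_eq_peak_succ_add (lam : ℂ) (h : 1 < ‖lam‖) (K : ℕ) (n : ℤ) :
    peak lam h K n = peak lam h (K + 1) n + lam⁻¹ * peak lam h (K + 1) (n - 2 ^ K) := by
  have h2K : (2 : ℤ) ^ K ≠ 0 := pow_ne_zero K two_ne_zero
  simp only [peak_apply, pow_succ, dilate_mul h2K two_ne_zero]
  exact dilate_eq_add_of_eq_add (x0Fun_eq_dilate_two_add lam) h2K n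

lemma zshift_zshift (m j : ℤ) (x : ellInf) : zshift m (zshift j x) = zshift (j + m) x := by
  refine lp.ext (funext fun n => ?_)
  change x (n - m - j) = x (n - (j + m))
  rw [sub_sub, add_comm m j]

lemma zshift_zero (x : ellInf) : zshift 0 x = x := by
  refine lp.ext (funext fun n => ?_)
  change x (n - 0) = x n
  rw [sub_zero]

def zshiftL (m : ℤ) : ellInf →L[ℂ] ellInf :=
  LinearMap.mkContinuous
    { toFun := zshift m
      map_add' := fun _ _ => rfl
      map_smul' := fun _ _ => rfl }
    1 fun x => by
      rw [one_mul]
      exact lp.norm_le_of_forall_le (norm_nonneg x) fun n =>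
        lp.norm_apply_le_norm ENNReal.top_ne_zero x (n - m)

lemma norm_zshiftL_le (m : ℤ) : ‖zshiftL m‖ ≤ 1 :=
  LinearMap.mkContinuous_norm_le _ zero_le_one _

lemma Flam_mem_invtSubmodule_zshiftL (lam : ℂ) (h : 1 < ‖lam‖) (m : ℤ) :
    Flam lam h ∈ Module.End.invtSubmodule (zshiftL m : ellInf →ₗ[ℂ] ellInf) := by
  refine Submodule.topologicalClosure_mem_invtSubmodule ?_
  rw [Module.End.mem_invtSubmodule_iff_map_le, Submodule.map_span]
  refine Submodule.span_mono ?_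
  rintro _ ⟨_, ⟨j, rfl⟩, rfl⟩
  exact ⟨j + m, (zshift_zshift m j _).symm⟩

lemma zshift_mem_Flam {lam : ℂ} {h : 1 < ‖lam‖} (m : ℤ) {x : ellInf} (hx : x ∈ Flam lam h) :
    zshift m x ∈ Flam lam h :=
  (Module.End.mem_invtSubmodule_iff_forall_mem_of_mem _).1 (Flam_mem_invtSubmodule_zshiftL lam h m)
    x hx

/-- `x - (-A)ⁿ x = (1 - (-A)ⁿ)(1 + A)⁻¹ (x + A x)` lies in `F` for every `n` and tends to `x`. -/
lemma mem_of_add_apply_mem {𝕜 E : Type*} [NontriviallyNormedField 𝕜] [NormedAddCommGroup E]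
    [NormedSpace 𝕜 E] {F : Submodule 𝕜 E} (hF : IsClosed (F : Set E)) {A : E →L[𝕜] E}
    (hA : ‖A‖ < 1) (hAF : ∀ x ∈ F, A x ∈ F) {x : E} (hx : x + A x ∈ F) : x ∈ F := by
  have hmem : ∀ n : ℕ, x - ((-A) ^ n) x ∈ F := by
    intro n
    induction n with
    | zero => simp
    | succ n ih =>
      have key : x - ((-A) ^ (n + 1)) x = x + A x - A (x - ((-A) ^ n) x) := by
        rw [pow_succ']
        change x - (-A) (((-A) ^ n) x) = _
        rw [neg_apply, map_sub]
        abel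
      rw [key]
      exact F.sub_mem hx (hAF _ ih)
  have hpow : Tendsto (fun n : ℕ => ((-A) ^ n) x) atTop (𝓝 0) := by
    have := ((ContinuousLinearMap.apply 𝕜 E x).continuous.tendsto 0).comp
      (tendsto_pow_atTop_nhds_zero_of_norm_lt_one (by rwa [norm_neg]))
    simpa only [Function.comp_def, ContinuousLinearMap.apply_apply, zero_apply] using this
  have hlim : Tendsto (fun n : ℕ => x - ((-A) ^ n) x) atTop (𝓝 x) := by
    simpa using tendsto_const_nhds.sub hpow
  exact hF.mem_of_tendsto hlim (Filter.Eventually.of_forall hmem)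

lemma peak_mem_Flam (lam : ℂ) (h : 1 < ‖lam‖) (K : ℕ) : peak lam h K ∈ Flam lam h := by
  induction K with
  | zero =>
    rw [peak_zero]
    exact Submodule.le_topologicalClosure _ (Submodule.subset_span ⟨0, zshift_zero _⟩)
  | succ K ih =>
    have hA : ‖lam⁻¹ • zshiftL (2 ^ K)‖ < 1 :=
      calc ‖lam⁻¹ • zshiftL (2 ^ K)‖ ≤ ‖lam⁻¹‖ * ‖zshiftL (2 ^ K)‖ :=
            ContinuousLinearMap.opNorm_smul_le _ _
        _ ≤ ‖lam⁻¹‖ * 1 := by gcongr; exact norm_zshiftL_le _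
        _ < 1 := by rw [mul_one, norm_inv]; exact inv_lt_one_of_one_lt₀ h
    have hsum : peak lam h (K + 1) + (lam⁻¹ • zshiftL (2 ^ K)) (peak lam h (K + 1))
        = peak lam h K := by
      refine lp.ext (funext fun n => ?_)
      exact (peak_eq_peak_succ_add lam h K n).symm
    refine mem_of_add_apply_mem (Submodule.isClosed_topologicalClosure _) hA
      (fun x hx => Submodule.smul_mem _ _ (zshift_mem_Flam _ hx)) ?_
    rwa [hsum]

lemma peak_apply_zero (lam : ℂ) (h : 1 < ‖lam‖) (K : ℕ) : peak lam h K 0 = 1 := by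
  rw [peak_apply, dilate_apply_zero, x0Fun_zero]

lemma norm_peak_apply_le {lam : ℂ} (h : 1 < ‖lam‖) (K : ℕ) {n : ℤ} (hn : n ≠ 0) :
    ‖peak lam h K n‖ ≤ ‖lam‖⁻¹ :=
  norm_dilate_le_of_ne_zero (by positivity) (fun _ hm => norm_x0Fun_le_inv h hm) hn

lemma two_pow_dvd_of_peak_apply_ne_zero {lam : ℂ} {h : 1 < ‖lam‖} {K : ℕ} {n : ℤ}
    (hn : peak lam h K n ≠ 0) : (2 : ℤ) ^ K ∣ n :=
  dvd_of_dilate_ne_zero hn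

lemma exists_two_pow_dvd_sub_imp_eq (I : Finset ℤ) :
    ∃ K : ℕ, ∀ s ∈ I, ∀ t ∈ I, (2 : ℤ) ^ K ∣ s - t → s = t := by
  set M := I.sup Int.natAbs
  refine ⟨2 * M, fun s hs t ht hdvd => sub_eq_zero.1 (Int.eq_zero_of_abs_lt_dvd hdvd ?_)⟩
  have hsM : s.natAbs ≤ M := Finset.le_sup (f := Int.natAbs) hs
  have htM : t.natAbs ≤ M := Finset.le_sup (f := Int.natAbs) ht
  have hM : ((2 * M : ℕ) : ℤ) < 2 ^ (2 * M) := by exact_mod_cast Nat.lt_two_pow_self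
  rw [abs_lt]
  constructor <;> omega

section Interpolation

variable {R : Type*} [SeminormedRing R] {w : ℤ → R} {d : ℤ} {I : Finset ℤ}

lemma sum_mul_apply_sub_self (hw0 : w 0 = 1) (hwd : ∀ n, w n ≠ 0 → d ∣ n)
    (hI : ∀ s ∈ I, ∀ t ∈ I, d ∣ s - t → s = t) (y : ℤ → R) {s : ℤ} (hs : s ∈ I) :
    ∑ t ∈ I, y t * w (s - t) = y s := by
  rw [Finset.sum_eq_single_of_mem s hs, sub_self, hw0, mul_one]
  intro t ht hts
  by_contra hne
  exact hts (hI s hs t ht (hwd _ (right_ne_zero_of_mul hne))).symm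

lemma norm_sum_mul_apply_sub_le {c : ℝ} (hwc : ∀ n ≠ 0, ‖w n‖ ≤ c)
    (hwd : ∀ n, w n ≠ 0 → d ∣ n) (hI : ∀ s ∈ I, ∀ t ∈ I, d ∣ s - t → s = t)
    {y : ℤ → R} {M : ℝ} (hyM : ∀ t, ‖y t‖ ≤ M) {s : ℤ} (hs : s ∉ I) :
    ‖∑ t ∈ I, y t * w (s - t)‖ ≤ c * M := by
  by_cases hex : ∃ t ∈ I, w (s - t) ≠ 0
  · obtain ⟨t, ht, hwt⟩ := hex
    -- two shifts of `w` hitting `s` are congruent mod `d`, so they coincide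
    have hrest : ∀ u ∈ I, u ≠ t → y u * w (s - u) = 0 := by
      intro u hu hut
      by_contra hne
      have hdvd : d ∣ (s - u) - (s - t) := dvd_sub (hwd _ (right_ne_zero_of_mul hne)) (hwd _ hwt)
      exact hut (hI t ht u hu (by simpa using hdvd)).symm
    rw [Finset.sum_eq_single_of_mem t ht hrest]
    calc ‖y t * w (s - t)‖ ≤ ‖y t‖ * ‖w (s - t)‖ := norm_mul_le _ _
      _ ≤ M * c := mul_le_mul (hyM t) (hwc _ (sub_ne_zero.2 fun hst => hs (hst ▸ ht)))
          (norm_nonneg _) ((norm_nonneg _).trans (hyM t))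
      _ = c * M := mul_comm _ _
  · push Not at hex
    rw [Finset.sum_eq_zero fun t ht => by rw [hex t ht, mul_zero], norm_zero]
    exact mul_nonneg ((norm_nonneg _).trans (hwc 1 one_ne_zero)) ((norm_nonneg _).trans (hyM 0))

end Interpolation

/-- Statement 9.  If `y ∈ ℓ∞(ℤ)` is finitely supported, with support contained in the finite
set `I` (i.e. `y(t) = 0` for `t ∉ I`), then there is `x ∈ F^{(λ)}` with `x(t) = y(t)` for
`t ∈ I` and `|x(t)| ≤ |λ|⁻¹ ‖y‖_∞` for `t ∉ I`. -/
theorem statement_9 (lam : ℂ) (h : 1 < ‖lam‖) (y : ℤ → ℂ) (I : Finset ℤ)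
    (hsupp : ∀ t : ℤ, t ∉ I → y t = 0) :
    ∃ x : ellInf, x ∈ Flam lam h ∧ (∀ t ∈ I, x t = y t) ∧
      ∀ t : ℤ, t ∉ I → ‖x t‖ ≤ ‖lam‖⁻¹ * (⨆ s : ℤ, ‖y s‖) := by
  obtain ⟨K, hK⟩ := exists_two_pow_dvd_sub_imp_eq I
  have hy : ∀ t, ‖y t‖ ≤ ⨆ s : ℤ, ‖y s‖ := by
    refine le_ciSup ⟨∑ t ∈ I, ‖y t‖, ?_⟩
    rintro _ ⟨s, rfl⟩
    by_cases hs : s ∈ I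
    · exact Finset.single_le_sum (fun t _ => norm_nonneg (y t)) hs
    · simpa [hsupp s hs] using Finset.sum_nonneg fun t _ => norm_nonneg (y t)
  set x : ellInf := ∑ t ∈ I, y t • zshift t (peak lam h K)
  have hx : ∀ s, x s = ∑ t ∈ I, y t * peak lam h K (s - t) := fun s => by
    simp only [x, lp.coeFn_sum, Finset.sum_apply]
    rfl
  refine ⟨x, Submodule.sum_mem _ fun t _ =>
    Submodule.smul_mem _ _ (zshift_mem_Flam t (peak_mem_Flam lam h K)), fun s hs => ?_,
    fun s hs => ?_⟩
  · rw [hx, sum_mul_apply_sub_self (peak_apply_zero lam h K)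
      (fun _ => two_pow_dvd_of_peak_apply_ne_zero) hK y hs]
  · rw [hx]
    exact norm_sum_mul_apply_sub_le (fun _ => norm_peak_apply_le h K)
      (fun _ => two_pow_dvd_of_peak_apply_ne_zero) hK hy hs
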